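/- arXiv:2104.01473 — 6 statements merged into one kernel-verified Lean document; each statement's English description precedes it below -/
import Mathlib

section
/- If s > λ > 0 and 0 < x₀ < s - λ, then the iteration x_{k+1} = f(x_k) with f(x) = s²x/(x(s+λ)+λ²) satisfies x₀ ≤ x_k < s - λ for all k, i.e., the sequence stays in [x₀, s-λ). -/
/-- If `s > λ > 0` and `0 < x₀ < s - λ`, then the iteration `x_{k+1} = f(x_k)`
with `f(x) = s²x/(x(s+λ)+λ²)` satisfies `x₀ ≤ x_k < s - λ` for all `k`. -/
theorem iteration_stays_below_threshold (s l : ℝ) (hl : 0 < l) (hsl : l < s)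
    (x : ℕ → ℝ) (hx0 : 0 < x 0) (hx0' : x 0 < s - l)
    (hrec : ∀ k, x (k + 1) = s ^ 2 * x k / (x k * (s + l) + l ^ 2)) :
    ∀ k, x 0 ≤ x k ∧ x k < s - l := by
  intro k
  induction k with
  | zero => exact ⟨le_refl _, hx0'⟩
  | succ n ih =>
    obtain ⟨h1, h2⟩ := ih
    have hxn : 0 < x n := lt_of_lt_of_le hx0 h1
    have hden : 0 < x n * (s + l) + l ^ 2 := by nlinarith
    rw [hrec n]
    constructor
    · refine le_trans h1 ?_
      rw [le_div_iff₀ hden]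
      nlinarith [mul_nonneg (mul_nonneg hxn.le (by linarith : (0:ℝ) ≤ s + l)) (by linarith : (0:ℝ) ≤ s - l - x n)]
    · rw [div_lt_iff₀ hden]
      nlinarith [sq_nonneg l, mul_pos (mul_pos hl hl) (sub_pos.2 h2)]
end

section
/- If s > λ > 0 and x₀ ≥ s - λ with x₀ > 0, then the iteration x_{k+1} = f(x_k) with f(x) = s²x/(x(s+λ)+λ²) satisfies s - λ ≤ x_k ≤ x₀ for all k. -/
/-- If `s > λ > 0` and `x₀ ≥ s - λ` with `x₀ > 0`, then the iteration
`x_{k+1} = f(x_k)` with `f(x) = s²x/(x(s+λ)+λ²)` satisfies `s - λ ≤ x_k ≤ x₀`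
for all `k`. -/
theorem iteration_stays_above_threshold (s l : ℝ) (hl : 0 < l) (hsl : l < s)
    (x : ℕ → ℝ) (hx0 : 0 < x 0) (hx0' : s - l ≤ x 0)
    (hrec : ∀ k, x (k + 1) = s ^ 2 * x k / (x k * (s + l) + l ^ 2)) :
    ∀ k, s - l ≤ x k ∧ x k ≤ x 0 := by
  intro k
  induction k with
  | zero => exact ⟨hx0', le_refl _⟩
  | succ n ih =>
    obtain ⟨h1, h2⟩ := ih
    have hxpos : 0 < x n := lt_of_lt_of_le (by linarith) h1
    have hD : 0 < x n * (s + l) + l ^ 2 := by nlinarith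
    rw [hrec n]
    constructor
    · rw [le_div_iff₀ hD]; nlinarith
    · have : s ^ 2 * x n / (x n * (s + l) + l ^ 2) ≤ x n := by
        rw [div_le_iff₀ hD]; nlinarith [mul_nonneg (mul_nonneg hxpos.le (by linarith : (0:ℝ) ≤ s + l)) (by linarith : (0:ℝ) ≤ x n - (s - l))]
      linarith
end

section
/- For any s, λ, x₀ ∈ (0,∞) with s ≠ λ, there exists c ∈ [0,1) such that the sequence defined by x_{k+1} = s²x_k/(x_k(s+λ)+λ²) satisfies |x_{k+1} - max(0, s-λ)| ≤ c·|x_k - max(0, s-λ)| for all k; in particular x_k converges to max(0, s-λ). -/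
open Filter

lemma tendsto_of_contraction_aux (x : ℕ → ℝ) (L c : ℝ) (hc0 : 0 ≤ c) (hc1 : c < 1)
    (h : ∀ k, |x (k + 1) - L| ≤ c * |x k - L|) : Tendsto x atTop (nhds L) := by
  have hk : ∀ k, |x k - L| ≤ c ^ k * |x 0 - L| := by
    intro k
    induction k with
    | zero => simp
    | succ n ih =>
      calc |x (n + 1) - L| ≤ c * |x n - L| := h n
        _ ≤ c * (c ^ n * |x 0 - L|) := mul_le_mul_of_nonneg_left ih hc0
        _ = c ^ (n + 1) * |x 0 - L| := by ring
  have hgeo : Tendsto (fun k : ℕ => c ^ k * |x 0 - L|) atTop (nhds 0) := by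
    have := (tendsto_pow_atTop_nhds_zero_of_lt_one hc0 hc1).mul_const (|x 0 - L|)
    simpa using this
  have h0 : Tendsto (fun k => |x k - L|) atTop (nhds 0) :=
    squeeze_zero (fun k => abs_nonneg _) hk hgeo
  rw [tendsto_iff_norm_sub_tendsto_zero]
  simpa [Real.norm_eq_abs] using h0

/-- For any `s, λ, x₀ ∈ (0,∞)` with `s ≠ λ`, there exists `c ∈ [0,1)` such that
the sequence `x_{k+1} = s²x_k/(x_k(s+λ)+λ²)` satisfies
`|x_{k+1} - (s-λ)⁺| ≤ c·|x_k - (s-λ)⁺|` for all `k`; in particular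
`x_k → (s-λ)⁺ = max 0 (s-λ)`. -/
theorem global_linear_convergence_to_softmax (s l : ℝ) (hs : 0 < s) (hl : 0 < l)
    (hsl : s ≠ l) (x : ℕ → ℝ) (hx0 : 0 < x 0)
    (hrec : ∀ k, x (k + 1) = s ^ 2 * x k / (x k * (s + l) + l ^ 2)) :
    (∃ c, 0 ≤ c ∧ c < 1 ∧
        ∀ k, |x (k + 1) - max 0 (s - l)| ≤ c * |x k - max 0 (s - l)|) ∧
      Tendsto x atTop (nhds (max 0 (s - l))) := by
  have hpos : ∀ k, 0 < x k := by
    intro k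
    induction k with
    | zero => exact hx0
    | succ n ih =>
      rw [hrec]
      positivity
  rcases lt_or_gt_of_ne hsl with hlt | hgt
  · -- s < l, limit is 0
    have hmax : max 0 (s - l) = 0 := max_eq_left (by linarith)
    rw [hmax]
    have hc0 : (0:ℝ) ≤ s ^ 2 / l ^ 2 := by positivity
    have hc1 : s ^ 2 / l ^ 2 < 1 := by
      rw [div_lt_one (by positivity)]
      nlinarith
    have hbd : ∀ k, |x (k + 1) - 0| ≤ s ^ 2 / l ^ 2 * |x k - 0| := by
      intro k
      have hD : 0 < x k * (s + l) + l ^ 2 := by nlinarith [hpos k]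
      rw [sub_zero, sub_zero, abs_of_pos (hpos (k + 1)), abs_of_pos (hpos k), hrec]
      rw [div_le_iff₀ hD]
      have hxk := hpos k
      have hid : s ^ 2 / l ^ 2 * l ^ 2 = s ^ 2 := by field_simp
      nlinarith [hid, mul_nonneg (div_nonneg (sq_nonneg s) (sq_nonneg l))
        (mul_nonneg (mul_nonneg hxk.le hxk.le) (add_pos hs hl).le)]
    exact ⟨⟨_, hc0, hc1, hbd⟩, tendsto_of_contraction_aux _ _ _ hc0 hc1 hbd⟩
  · -- s > l, limit is s - l
    have hmax : max 0 (s - l) = s - l := max_eq_right (by linarith)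
    rw [hmax]
    set m := min (x 0) (s - l) with hm
    have hm0 : 0 < m := lt_min hx0 (by linarith)
    have hml : m ≤ s - l := min_le_right _ _
    have hlb : ∀ k, m ≤ x k := by
      intro k
      induction k with
      | zero => exact min_le_left _ _
      | succ n ih =>
        have ha := hpos n
        have hD : 0 < x n * (s + l) + l ^ 2 := by nlinarith
        rw [hrec, le_div_iff₀ hD]
        nlinarith [mul_nonneg (sub_nonneg.mpr ih) (sq_nonneg l),
          mul_nonneg (mul_nonneg ha.le (sub_nonneg.mpr hml)) (add_pos hs hl).le]
    set c := l ^ 2 / (m * (s + l) + l ^ 2) with hc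
    have hE : 0 < m * (s + l) + l ^ 2 := by nlinarith
    have hc0 : 0 ≤ c := by positivity
    have hc1 : c < 1 := by
      rw [hc, div_lt_one hE]
      nlinarith
    have hbd : ∀ k, |x (k + 1) - (s - l)| ≤ c * |x k - (s - l)| := by
      intro k
      have hD : 0 < x k * (s + l) + l ^ 2 := by nlinarith [hpos k]
      have key : x (k + 1) - (s - l) = l ^ 2 * (x k - (s - l)) / (x k * (s + l) + l ^ 2) := by
        rw [hrec]
        field_simp
        ring
      have habs : |x (k + 1) - (s - l)| = l ^ 2 / (x k * (s + l) + l ^ 2) * |x k - (s - l)| := by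
        rw [key, abs_div, abs_mul, abs_of_pos hD, abs_of_pos (show (0:ℝ) < l ^ 2 by positivity)]
        ring
      rw [habs]
      apply mul_le_mul_of_nonneg_right _ (abs_nonneg _)
      apply div_le_div_of_nonneg_left (by positivity) hE
      have := hlb k
      nlinarith
    exact ⟨⟨_, hc0, hc1, hbd⟩, tendsto_of_contraction_aux _ _ _ hc0 hc1 hbd⟩
end

section
/- Let X ∈ ℝ^{n×m} with reduced SVD X = USVᵀ, let λ > 0, r ≤ p = min(m,n), D = sqrt(max(0, S - λI)), A = U D I_{p×r}, B = V D I_{p×r}. Then the value of the objective (1/2)‖X - ABᵀ‖_F² + (λ/2)(‖A‖_F² + ‖B‖_F²) equals (1/2)Σ_{i=1}^{p} (s_i - d_i²)² + λ Σ_{i=1}^{r} d_i², where d_i² = max(0, s_i - λ) for i ≤ r and d_i = 0 otherwise. -/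
open Matrix

/-- The squared Frobenius norm of a real matrix. -/
def frobSq {n m : ℕ} (M : Matrix (Fin n) (Fin m) ℝ) : ℝ :=
  ∑ i, ∑ j, (M i j) ^ 2

/-- The `p × r` truncated identity matrix. -/
def truncId (p r : ℕ) : Matrix (Fin p) (Fin r) ℝ :=
  fun i j => if (i : ℕ) = (j : ℕ) then 1 else 0

lemma frobSq_transpose {n m : ℕ} (M : Matrix (Fin n) (Fin m) ℝ) :
    frobSq Mᵀ = frobSq M := by
  unfold frobSq
  rw [Finset.sum_comm]
  simp [Matrix.transpose_apply]

lemma frobSq_eq_trace {n m : ℕ} (M : Matrix (Fin n) (Fin m) ℝ) :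
    frobSq M = (Mᵀ * M).trace := by
  unfold frobSq
  rw [Finset.sum_comm]
  simp [Matrix.trace, Matrix.mul_apply, Matrix.diag, sq]

lemma frobSq_mul_left {n p q : ℕ} (U : Matrix (Fin n) (Fin p) ℝ)
    (hU : Uᵀ * U = 1) (C : Matrix (Fin p) (Fin q) ℝ) :
    frobSq (U * C) = frobSq C := by
  rw [frobSq_eq_trace, frobSq_eq_trace, Matrix.transpose_mul]
  rw [Matrix.mul_assoc, ← Matrix.mul_assoc Uᵀ, hU, Matrix.one_mul]

lemma frobSq_mul_right {m p q : ℕ} (V : Matrix (Fin m) (Fin p) ℝ)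
    (hV : Vᵀ * V = 1) (C : Matrix (Fin q) (Fin p) ℝ) :
    frobSq (C * Vᵀ) = frobSq C := by
  rw [← frobSq_transpose (C * Vᵀ), Matrix.transpose_mul, Matrix.transpose_transpose,
    frobSq_mul_left V hV, frobSq_transpose]

lemma sum_fin_ite (r : ℕ) (c : ℝ) (k : ℕ) :
    ∑ j : Fin r, (if k = (j : ℕ) then c else 0) = if k < r then c else 0 := by
  rw [Fin.sum_univ_eq_sum_range (fun j => if k = j then c else 0)]
  rw [Finset.sum_ite_eq (Finset.range r) k (fun _ => c)]
  simp

lemma TT (p r : ℕ) (i j : Fin p) :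
    (truncId p r * (truncId p r)ᵀ) i j
      = if (i : ℕ) = (j : ℕ) then (if (i : ℕ) < r then 1 else 0) else 0 := by
  simp only [Matrix.mul_apply, truncId, Matrix.transpose_apply]
  by_cases hij : (i : ℕ) = (j : ℕ)
  · rw [if_pos hij, ← hij]
    rw [← sum_fin_ite r 1 (i : ℕ)]
    apply Finset.sum_congr rfl
    intro k _
    split_ifs <;> ring
  · rw [if_neg hij]
    apply Finset.sum_eq_zero
    intro k _
    split_ifs with h1 h2
    · exact absurd (h1.trans h2.symm) hij
    all_goals ring

lemma key_diag (p r : ℕ) (d : Fin p → ℝ) :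
    Matrix.diagonal d * truncId p r * (truncId p r)ᵀ * Matrix.diagonal d
      = Matrix.diagonal (fun i : Fin p => if (i : ℕ) < r then d i ^ 2 else 0) := by
  rw [Matrix.mul_assoc (Matrix.diagonal d)]
  ext i j
  rw [Matrix.mul_diagonal, Matrix.diagonal_mul, TT]
  simp only [Matrix.diagonal_apply]
  by_cases hij : i = j
  · subst hij
    simp [pow_two]
  · have : ¬ (i : ℕ) = (j : ℕ) := fun h => hij (Fin.ext h)
    simp [hij, this]

lemma frobSq_diagonal {p : ℕ} (f : Fin p → ℝ) :
    frobSq (Matrix.diagonal f) = ∑ i, f i ^ 2 := by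
  unfold frobSq
  refine Finset.sum_congr rfl fun i _ => ?_
  simp [Matrix.diagonal_apply, apply_ite (fun x : ℝ => x ^ 2), Finset.sum_ite_eq]

lemma frobSq_diag_trunc (p r : ℕ) (d : Fin p → ℝ) :
    frobSq (Matrix.diagonal d * truncId p r)
      = ∑ i : Fin p, if (i : ℕ) < r then d i ^ 2 else 0 := by
  unfold frobSq
  refine Finset.sum_congr rfl fun i _ => ?_
  have : ∀ j : Fin r, ((Matrix.diagonal d * truncId p r) i j) ^ 2
      = if (i : ℕ) = (j : ℕ) then d i ^ 2 else 0 := by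
    intro j
    rw [Matrix.diagonal_mul]
    simp only [truncId]
    split_ifs <;> ring
  rw [Finset.sum_congr rfl fun j _ => this j, sum_fin_ite]

/-- Let `X ∈ ℝ^{n×m}` have reduced SVD `X = USVᵀ` (`U` of size `n×p`, `V` of
size `m×p` with orthonormal columns, `S = diag(s)` with `s₁ ≥ ... ≥ s_p ≥ 0`,
`p = min(m,n)`), let `λ > 0`, `r ≤ p`, `D = diag(√(max(0, s_i - λ)))`,
`A = U D I_{p×r}`, `B = V D I_{p×r}`. Then
`(1/2)‖X - ABᵀ‖_F² + (λ/2)(‖A‖_F² + ‖B‖_F²)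
  = (1/2)Σ_{i=1}^{p} (s_i - d_i²)² + λ Σ_{i=1}^{r} d_i²`,
where `d_i² = max(0, s_i - λ)` for `i ≤ r` and `d_i = 0` otherwise. -/
theorem soft_svd_objective_value (n m p r : ℕ) (hp : p = min m n) (hr : r ≤ p)
    (lam : ℝ) (hlam : 0 < lam)
    (X : Matrix (Fin n) (Fin m) ℝ)
    (U : Matrix (Fin n) (Fin p) ℝ) (V : Matrix (Fin m) (Fin p) ℝ) (s : Fin p → ℝ)
    (hU : Uᵀ * U = 1) (hV : Vᵀ * V = 1)
    (hs_nonneg : ∀ i, 0 ≤ s i) (hs_mono : ∀ i j : Fin p, i ≤ j → s j ≤ s i)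
    (hX : X = U * Matrix.diagonal s * Vᵀ)
    (A : Matrix (Fin n) (Fin r) ℝ) (B : Matrix (Fin m) (Fin r) ℝ)
    (hA : A = U * Matrix.diagonal (fun i => Real.sqrt (max 0 (s i - lam))) * truncId p r)
    (hB : B = V * Matrix.diagonal (fun i => Real.sqrt (max 0 (s i - lam))) * truncId p r) :
    (1 / 2) * frobSq (X - A * Bᵀ) + (lam / 2) * (frobSq A + frobSq B)
      = (1 / 2) * ∑ i : Fin p,
            (s i - (if (i : ℕ) < r then max 0 (s i - lam) else 0)) ^ 2
        + lam * ∑ i ∈ Finset.univ.filter (fun i : Fin p => (i : ℕ) < r),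
            max 0 (s i - lam) := by
  set d : Fin p → ℝ := fun i => Real.sqrt (max 0 (s i - lam)) with hd
  have hd2 : ∀ i, d i ^ 2 = max 0 (s i - lam) := fun i =>
    Real.sq_sqrt (le_max_left _ _)
  -- frobSq A and frobSq B
  have hfA : frobSq A = ∑ i ∈ Finset.univ.filter (fun i : Fin p => (i : ℕ) < r),
      max 0 (s i - lam) := by
    rw [hA, Matrix.mul_assoc, frobSq_mul_left U hU, frobSq_diag_trunc,
      Finset.sum_filter]
    exact Finset.sum_congr rfl fun i _ => by rw [hd2]
  have hfB : frobSq B = ∑ i ∈ Finset.univ.filter (fun i : Fin p => (i : ℕ) < r),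
      max 0 (s i - lam) := by
    rw [hB, Matrix.mul_assoc, frobSq_mul_left V hV, frobSq_diag_trunc,
      Finset.sum_filter]
    exact Finset.sum_congr rfl fun i _ => by rw [hd2]
  -- the residual
  have hAB : A * Bᵀ = U * Matrix.diagonal
      (fun i : Fin p => if (i : ℕ) < r then max 0 (s i - lam) else 0) * Vᵀ := by
    rw [hA, hB, Matrix.transpose_mul, Matrix.transpose_mul, Matrix.diagonal_transpose]
    simp only [Matrix.mul_assoc]
    rw [show Matrix.diagonal d * (truncId p r * ((truncId p r)ᵀ * (Matrix.diagonal d * Vᵀ)))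
        = (Matrix.diagonal d * truncId p r * (truncId p r)ᵀ * Matrix.diagonal d) * Vᵀ by
      simp only [Matrix.mul_assoc], key_diag]
    simp only [hd2]
  have hres : frobSq (X - A * Bᵀ)
      = ∑ i : Fin p, (s i - (if (i : ℕ) < r then max 0 (s i - lam) else 0)) ^ 2 := by
    rw [hX, hAB, ← Matrix.sub_mul, ← Matrix.mul_sub, frobSq_mul_right V hV,
      frobSq_mul_left U hU, Matrix.diagonal_sub, frobSq_diagonal]
  rw [hres, hfA, hfB]
  ring
end

section
/- Let X = USVᵀ with U, V orthogonal and S diagonal with nonnegative entries. Partition U = [U₁ U₂] and S = diag(S₁, S₂) at index ℓ, where all entries of S₁ are at least s_ℓ > 0 and all entries of S₂ are at most s_{ℓ+1}. Suppose a sequence of n×ℓ matrices M_k satisfies U₂ᵀM_k = S₂^{2k} U₂ᵀM₀ (U₁ᵀM₀)⁻¹ S₁^{−2k} U₁ᵀM_k (with U₁ᵀM₀ invertible). Then ‖U₂ᵀM_k‖ ≤ ‖U₂ᵀM₀(U₁ᵀM₀)⁻¹‖·(s_{ℓ+1}/s_ℓ)^{2k}·‖U₁ᵀM_k‖, so if s_{ℓ+1}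 < s_ℓ and ‖U₁ᵀM_k‖ stays bounded, ‖U₂ᵀM_k‖ → 0 geometrically. -/
/-!
The relation factors `U₂ᵀM_k` as `S₂^{2k} · A · S₁^{-2k} · U₁ᵀM_k` with `A = U₂ᵀM₀(U₁ᵀM₀)⁻¹`.
The spectral norm is submultiplicative on rectangular matrices and the spectral norm of a
diagonal matrix is the largest modulus of its entries, so the two diagonal factors contribute
at most `s_{ℓ+1}^{2k}` and `s_ℓ^{-2k}`. A bound on `‖U₁ᵀM_k‖` then squeezes `‖U₂ᵀM_k‖`
below a geometric sequence of ratio `(s_{ℓ+1}/s_ℓ)² < 1`.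
-/

open Matrix Filter
open scoped Matrix.Norms.L2Operator

namespace Matrix

variable {m n p r s : Type*} [Fintype m] [Fintype n] [Fintype p] [Fintype r] [Fintype s]
  [DecidableEq n] [DecidableEq p] [DecidableEq r] [DecidableEq s]

theorem inv_diagonal_of_ne_zero {K : Type*} [Field K] {v : n → K}
    (hv : ∀ i, v i ≠ 0) : (diagonal v)⁻¹ = diagonal v⁻¹ :=
  inv_eq_right_inv <| by
    rw [diagonal_mul_diagonal, ← diagonal_one]
    exact congrArg diagonal (funext fun i => mul_inv_cancel₀ (hv i))

variable {𝕜 : Type*} [RCLike 𝕜]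

theorem l2_opNorm_diagonal_pow_le {v : n → 𝕜} {c : ℝ} (hc : 0 ≤ c)
    (hv : ∀ i, ‖v i‖ ≤ c) (k : ℕ) : ‖diagonal v ^ k‖ ≤ c ^ k := by
  rw [diagonal_pow, l2_opNorm_diagonal]
  refine (pi_norm_le_iff_of_nonneg (pow_nonneg hc k)).2 fun i => ?_
  rw [Pi.pow_apply, norm_pow]
  exact pow_le_pow_left₀ (norm_nonneg _) (hv i) k

theorem l2_opNorm_inv_diagonal_pow_le {v : n → 𝕜} {c : ℝ} (hc : 0 < c)
    (hv : ∀ i, c ≤ ‖v i‖) (k : ℕ) : ‖(diagonal v)⁻¹ ^ k‖ ≤ c⁻¹ ^ k := by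
  rw [inv_diagonal_of_ne_zero fun i => norm_pos_iff.1 (hc.trans_le (hv i))]
  refine l2_opNorm_diagonal_pow_le (inv_nonneg.2 hc.le) (fun i => ?_) k
  rw [Pi.inv_apply, norm_inv]
  exact inv_anti₀ hc (hv i)

theorem l2_opNorm_mul_mul_mul_le (A : Matrix m n 𝕜) (B : Matrix n p 𝕜) (C : Matrix p r 𝕜)
    (D : Matrix r s 𝕜) : ‖A * B * C * D‖ ≤ ‖A‖ * ‖B‖ * ‖C‖ * ‖D‖ := by
  grw [l2_opNorm_mul, l2_opNorm_mul, l2_opNorm_mul]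

end Matrix

theorem tendsto_mul_pow_two_mul_mul_atTop_nhds_zero {r : ℝ} (h₀ : 0 ≤ r) (h₁ : r < 1)
    (a b : ℝ) : Tendsto (fun k : ℕ => a * r ^ (2 * k) * b) atTop (nhds 0) := by
  simpa using (((tendsto_pow_atTop_nhds_zero_of_lt_one h₀ h₁).comp
    (tendsto_id.const_mul_atTop' two_pos)).const_mul a).mul_const b

theorem subspace_iteration_convergence_general (n l q : ℕ)
    (sl sl1 : ℝ) (hsl : 0 < sl) (hsl1 : 0 ≤ sl1) (hlt : sl1 < sl)
    (σ1 : Fin l → ℝ) (hσ1 : ∀ i, sl ≤ σ1 i)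
    (σ2 : Fin q → ℝ) (hσ2 : ∀ i, 0 ≤ σ2 i ∧ σ2 i ≤ sl1)
    (U1 : Matrix (Fin n) (Fin l) ℝ) (U2 : Matrix (Fin n) (Fin q) ℝ)
    (M : ℕ → Matrix (Fin n) (Fin l) ℝ)
    (hrel : ∀ k : ℕ, U2ᵀ * M k =
      (Matrix.diagonal σ2) ^ (2 * k) * (U2ᵀ * M 0) * (U1ᵀ * M 0)⁻¹ *
        ((Matrix.diagonal σ1)⁻¹) ^ (2 * k) * (U1ᵀ * M k)) :
    (∀ k : ℕ, ‖U2ᵀ * M k‖ ≤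
        ‖(U2ᵀ * M 0) * (U1ᵀ * M 0)⁻¹‖ * (sl1 / sl) ^ (2 * k) * ‖U1ᵀ * M k‖) ∧
      (∀ C : ℝ, (∀ k, ‖U1ᵀ * M k‖ ≤ C) →
        Tendsto (fun k => ‖U2ᵀ * M k‖) atTop (nhds 0)) := by
  set A := (U2ᵀ * M 0) * (U1ᵀ * M 0)⁻¹
  have hS2 k : ‖diagonal σ2 ^ (2 * k)‖ ≤ sl1 ^ (2 * k) :=
    l2_opNorm_diagonal_pow_le hsl1
      (fun i => (Real.norm_of_nonneg (hσ2 i).1).trans_le (hσ2 i).2) _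
  have hS1_inv k : ‖(diagonal σ1)⁻¹ ^ (2 * k)‖ ≤ sl⁻¹ ^ (2 * k) :=
    l2_opNorm_inv_diagonal_pow_le hsl (fun i => (hσ1 i).trans (Real.le_norm_self _)) _
  have hbound k : ‖U2ᵀ * M k‖ ≤ ‖A‖ * (sl1 / sl) ^ (2 * k) * ‖U1ᵀ * M k‖ := by
    calc ‖U2ᵀ * M k‖
        ≤ ‖diagonal σ2 ^ (2 * k)‖ * ‖A‖ * ‖(diagonal σ1)⁻¹ ^ (2 * k)‖ * ‖U1ᵀ * M k‖ := by
          rw [hrel k, Matrix.mul_assoc (diagonal σ2 ^ (2 * k))]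
          exact l2_opNorm_mul_mul_mul_le _ _ _ _
      _ ≤ sl1 ^ (2 * k) * ‖A‖ * sl⁻¹ ^ (2 * k) * ‖U1ᵀ * M k‖ := by
          gcongr
          exacts [hS2 k, hS1_inv k]
      _ = _ := by rw [div_pow, inv_pow]; ring
  refine ⟨hbound, fun C hC => squeeze_zero (fun _ => norm_nonneg _) (fun k => ?_)
    (tendsto_mul_pow_two_mul_mul_atTop_nhds_zero (div_nonneg hsl1 hsl.le)
      ((div_lt_one hsl).2 hlt) ‖A‖ C)⟩
  grw [hbound k, hC k]

/-- Let `X = USVᵀ` with `U` orthogonal, partitioned as `U = [U₁ U₂]` and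
`S = diag(S₁, S₂)` at index `ℓ`, where all entries of `S₁` are at least
`sℓ > 0` and all entries of `S₂` are nonnegative and at most `sℓ₊₁ < sℓ`.
If a sequence of `n×ℓ` matrices `M_k` satisfies
`U₂ᵀM_k = S₂^{2k} U₂ᵀM₀ (U₁ᵀM₀)⁻¹ S₁^{−2k} U₁ᵀM_k` (with `U₁ᵀM₀` invertible),
then `‖U₂ᵀM_k‖ ≤ ‖U₂ᵀM₀(U₁ᵀM₀)⁻¹‖·(sℓ₊₁/sℓ)^{2k}·‖U₁ᵀM_k‖` in the spectral
norm, and if `‖U₁ᵀM_k‖` stays bounded then `‖U₂ᵀM_k‖ → 0`. -/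
theorem subspace_iteration_convergence (n l q : ℕ)
    (sl sl1 : ℝ) (hsl : 0 < sl) (hsl1 : 0 ≤ sl1) (hlt : sl1 < sl)
    (σ1 : Fin l → ℝ) (hσ1 : ∀ i, sl ≤ σ1 i)
    (σ2 : Fin q → ℝ) (hσ2 : ∀ i, 0 ≤ σ2 i ∧ σ2 i ≤ sl1)
    (U1 : Matrix (Fin n) (Fin l) ℝ) (U2 : Matrix (Fin n) (Fin q) ℝ)
    (hU1 : U1ᵀ * U1 = 1) (hU2 : U2ᵀ * U2 = 1) (hU12 : U1ᵀ * U2 = 0)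
    (M : ℕ → Matrix (Fin n) (Fin l) ℝ)
    (hM0 : IsUnit (U1ᵀ * M 0))
    (hrel : ∀ k : ℕ, U2ᵀ * M k =
      (Matrix.diagonal σ2) ^ (2 * k) * (U2ᵀ * M 0) * (U1ᵀ * M 0)⁻¹ *
        ((Matrix.diagonal σ1)⁻¹) ^ (2 * k) * (U1ᵀ * M k)) :
    (∀ k : ℕ, ‖U2ᵀ * M k‖ ≤
        ‖(U2ᵀ * M 0) * (U1ᵀ * M 0)⁻¹‖ * (sl1 / sl) ^ (2 * k) * ‖U1ᵀ * M k‖) ∧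
      (∀ C : ℝ, (∀ k, ‖U1ᵀ * M k‖ ≤ C) →
        Tendsto (fun k => ‖U2ᵀ * M k‖) atTop (nhds 0)) :=
  subspace_iteration_convergence_general n l q sl sl1 hsl hsl1 hlt σ1 hσ1 σ2 hσ2 U1 U2 M hrel
end

section
/- Let s > λ > 0 and let (e_k), (ẽ_k) be sequences with |e_k| ≤ C·a^k and |ẽ_k| ≤ C·a^k for some a ∈ [0,1) and C > 0. Suppose (s_k) is a positive sequence satisfying s_{k+1} = s²s_k/(s_k(s+λ)+λ²) + ê_k where |ê_k| ≤ c'|e_k| + |ẽ_k| for some constant c'. Then s_k → s − λ. -/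
open Filter

/-- Let `s > λ > 0`, and let `(e_k)`, `(ẽ_k)` decay geometrically
(`|e_k| ≤ C·a^k`, `|ẽ_k| ≤ C·a^k`, `a ∈ [0,1)`, `C > 0`). Suppose `(s_k)` is a
positive sequence, bounded away from `0`, on which the unperturbed map
`f(x) = s²x/(x(s+λ)+λ²)` contracts toward `s - λ` with some factor `c ∈ [0,1)`,
satisfying the perturbed iteration `s_{k+1} = f(s_k) + ê_k` with
`|ê_k| ≤ c'|e_k| + |ẽ_k|`. Then `s_k → s − λ`. -/
theorem perturbed_singular_value_convergence (s l : ℝ) (hl : 0 < l) (hsl : l < s)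
    (a C : ℝ) (ha0 : 0 ≤ a) (ha1 : a < 1) (hC : 0 < C)
    (e et eh : ℕ → ℝ) (he : ∀ k, |e k| ≤ C * a ^ k) (het : ∀ k, |et k| ≤ C * a ^ k)
    (c' : ℝ) (heh : ∀ k, |eh k| ≤ c' * |e k| + |et k|)
    (sk : ℕ → ℝ) (hpos : ∀ k, 0 < sk k)
    (δ : ℝ) (hδ : 0 < δ) (hbdd : ∀ k, δ ≤ sk k)
    (c : ℝ) (hc0 : 0 ≤ c) (hc1 : c < 1)
    (hcontr : ∀ x : ℝ, δ ≤ x →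
      |s ^ 2 * x / (x * (s + l) + l ^ 2) - (s - l)| ≤ c * |x - (s - l)|)
    (hrec : ∀ k, sk (k + 1) = s ^ 2 * sk k / (sk k * (s + l) + l ^ 2) + eh k) :
    Tendsto sk atTop (nhds (s - l)) := by
  set d : ℕ → ℝ := fun k => |sk k - (s - l)| with hd
  set M : ℝ := (|c'| + 1) * C with hM
  have hM0 : 0 ≤ M := by positivity
  -- geometric bound on eh
  have heh' : ∀ k, |eh k| ≤ M * a ^ k := by
    intro k
    have h1 : c' * |e k| ≤ |c'| * (C * a ^ k) :=
      le_trans (mul_le_mul_of_nonneg_right (le_abs_self c') (abs_nonneg _))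
        (mul_le_mul_of_nonneg_left (he k) (abs_nonneg c'))
    have h2 := heh k
    have h3 := het k
    have h4 : (|c'| + 1) * C * a ^ k = |c'| * (C * a ^ k) + C * a ^ k := by ring
    rw [hM]
    linarith
  have hstep : ∀ k, d (k + 1) ≤ c * d k + M * a ^ k := by
    intro k
    have h1 : d (k + 1) ≤ |s ^ 2 * sk k / (sk k * (s + l) + l ^ 2) - (s - l)| + |eh k| := by
      rw [hd]
      simp only
      rw [hrec k]
      have := abs_add_le (s ^ 2 * sk k / (sk k * (s + l) + l ^ 2) - (s - l)) (eh k)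
      calc |s ^ 2 * sk k / (sk k * (s + l) + l ^ 2) + eh k - (s - l)|
          = |(s ^ 2 * sk k / (sk k * (s + l) + l ^ 2) - (s - l)) + eh k| := by ring_nf
        _ ≤ _ := this
    calc d (k + 1) ≤ |s ^ 2 * sk k / (sk k * (s + l) + l ^ 2) - (s - l)| + |eh k| := h1
      _ ≤ c * d k + M * a ^ k := add_le_add (hcontr (sk k) (hbdd k)) (heh' k)
  -- choose b strictly between max a c and 1
  set b : ℝ := (max a c + 1) / 2 with hb
  have hac1 : max a c < 1 := max_lt ha1 hc1
  have hcb : c < b := by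
    have : c ≤ max a c := le_max_right _ _
    simp only [hb]; linarith
  have hab : a ≤ b := by
    have : a ≤ max a c := le_max_left _ _
    simp only [hb]; linarith
  have hb1 : b < 1 := by simp only [hb]; linarith
  have hb0 : 0 ≤ b := le_trans hc0 hcb.le
  set K : ℝ := max (d 0) (M / (b - c)) with hK
  have hKM : M ≤ K * (b - c) := by
    have h1 : M / (b - c) ≤ K := le_max_right _ _
    have h2 : 0 < b - c := by linarith
    calc M = M / (b - c) * (b - c) := by field_simp
      _ ≤ K * (b - c) := by gcongr
  have hbound : ∀ k, d k ≤ K * b ^ k := by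
    intro k
    induction k with
    | zero =>
      rw [pow_zero, mul_one]
      exact le_max_left _ _
    | succ n ih =>
      calc d (n + 1) ≤ c * d n + M * a ^ n := hstep n
        _ ≤ c * (K * b ^ n) + M * b ^ n :=
            add_le_add (mul_le_mul_of_nonneg_left ih hc0)
              (mul_le_mul_of_nonneg_left (pow_le_pow_left₀ ha0 hab n) hM0)
        _ = (c * K + M) * b ^ n := by ring
        _ ≤ (K * b) * b ^ n :=
            mul_le_mul_of_nonneg_right (by linarith [hKM]) (pow_nonneg hb0 n)
        _ = K * b ^ (n + 1) := by ring
  have hlim : Tendsto (fun k => sk k - (s - l)) atTop (nhds 0) := by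
    have hg : Tendsto (fun k => K * b ^ k) atTop (nhds 0) := by
      have := tendsto_pow_atTop_nhds_zero_of_lt_one hb0 hb1
      simpa using this.const_mul K
    exact squeeze_zero_norm (fun k => by simpa [Real.norm_eq_abs] using hbound k) hg
  exact tendsto_sub_nhds_zero_iff.mp hlim
end
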